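/- arXiv:2411.06149 — 9 statements merged into one kernel-verified Lean document; each statement's English description precedes it below -/
import Mathlib

section
/- For every m ∈ ℕ and every k ∈ ℕ with k ≤ 2^m, the Euler iterate satisfies |X^m_k − x₀| ≤ M·(a·k/2^m) ≤ M·a; in particular the point (a·k/2^m, X^m_k) lies in U. -/
/-!
As long as `|X k - x₀| ≤ M t_k` with `t_k = a k / 2^m ≤ a`, the point `(t_k, X k)` lies in `U`,
so `|f| ≤ M` there and the next Euler step moves `X` by at most `M a / 2^m`, which
propagates the bound to `k + 1`.
-/

open Set

theorem norm_sub_zero_le_of_step_le {E : Type*} [SeminormedAddCommGroup E] {x : ℕ → E}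
    {δ : ℝ} {N : ℕ} (hstep : ∀ k < N, ‖x k - x 0‖ ≤ k * δ → ‖x (k + 1) - x k‖ ≤ δ) :
    ∀ k ≤ N, ‖x k - x 0‖ ≤ k * δ := by
  intro k
  induction k with
  | zero => simp
  | succ k ih =>
    intro hk
    have hprev := ih (Nat.le_of_succ_le hk)
    calc ‖x (k + 1) - x 0‖ ≤ ‖x (k + 1) - x k‖ + ‖x k - x 0‖ :=
          norm_sub_le_norm_sub_add_norm_sub _ _ _
      _ ≤ δ + k * δ := add_le_add (hstep k hk hprev) hprev
      _ = (k + 1 : ℕ) * δ := by push_cast; ring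

theorem mul_natCast_div_mem_Icc {a : ℝ} (ha : 0 ≤ a) {k n : ℕ} (hk : k ≤ n) :
    a * k / n ∈ Icc 0 a :=
  ⟨by positivity,
    div_le_of_le_mul₀ n.cast_nonneg ha (mul_le_mul_of_nonneg_left (Nat.cast_le.mpr hk) ha)⟩

theorem mk_mem_Icc_prod_Icc_of_abs_sub_le {a M t x₀ y : ℝ} (hM : 0 ≤ M) (ht : t ∈ Icc 0 a)
    (hy : |y - x₀| ≤ M * t) :
    (t, y) ∈ Icc 0 a ×ˢ Icc (x₀ - M * a) (x₀ + M * a) := by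
  have hMt : M * t ≤ M * a := mul_le_mul_of_nonneg_left ht.2 hM
  obtain ⟨hlo, hhi⟩ := abs_sub_le_iff.mp hy
  exact ⟨ht, by linarith, by linarith⟩

theorem euler_iterates_in_U_general
    (a M x₀ : ℝ) (ha : 0 < a) (hM : 0 < M)
    (U : Set (ℝ × ℝ))
    (hU : U = Set.Icc (0 : ℝ) a ×ˢ Set.Icc (x₀ - M * a) (x₀ + M * a))
    (f : ℝ × ℝ → ℝ)
    (hf_bdd : ∀ u ∈ U, |f u| ≤ M)
    (X : ℕ → ℕ → ℝ)
    (hX0 : ∀ m, X m 0 = x₀)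
    (hXs : ∀ m k, X m (k + 1) = X m k + a / 2 ^ m * f (a * k / 2 ^ m, X m k)) :
    ∀ m k : ℕ, k ≤ 2 ^ m →
      |X m k - x₀| ≤ M * (a * k / 2 ^ m) ∧
      M * (a * k / 2 ^ m) ≤ M * a ∧
      (a * k / 2 ^ m, X m k) ∈ U := by
  intro m
  have hgrid : ∀ k : ℕ, k ≤ 2 ^ m → a * k / 2 ^ m ∈ Icc 0 a := fun k hk => by
    exact_mod_cast mul_natCast_div_mem_Icc ha.le hk
  have hmem : ∀ k : ℕ, k ≤ 2 ^ m → |X m k - x₀| ≤ M * (a * k / 2 ^ m) →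
      (a * k / 2 ^ m, X m k) ∈ U :=
    fun k hk hX => hU ▸ mk_mem_Icc_prod_Icc_of_abs_sub_le hM.le (hgrid k hk) hX
  have hδ : ∀ k : ℕ, (k : ℝ) * (a / 2 ^ m * M) = M * (a * k / 2 ^ m) := fun k => by ring
  have hbound : ∀ k : ℕ, k ≤ 2 ^ m → |X m k - x₀| ≤ M * (a * k / 2 ^ m) := by
    have hstep := norm_sub_zero_le_of_step_le (x := X m) (N := 2 ^ m) fun k hk hX => by
      rw [hX0, Real.norm_eq_abs, hδ] at hX
      rw [hXs, add_sub_cancel_left, Real.norm_eq_abs, abs_mul, abs_of_pos (by positivity)]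
      exact mul_le_mul_of_nonneg_left (hf_bdd _ (hmem k hk.le hX)) (by positivity)
    simpa only [hX0, Real.norm_eq_abs, hδ] using hstep
  intro k hk
  exact ⟨hbound k hk, mul_le_mul_of_nonneg_left (hgrid k hk).2 hM.le, hmem k hk (hbound k hk)⟩

/-- For every m and k ≤ 2^m, the Euler iterate satisfies
|X^m_k − x₀| ≤ M·(a·k/2^m) ≤ M·a; in particular (a·k/2^m, X^m_k) ∈ U. -/
theorem euler_iterates_in_U
    (a M L x₀ : ℝ) (ha : 0 < a) (hM : 0 < M) (hL : 0 < L)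
    (U : Set (ℝ × ℝ))
    (hU : U = Set.Icc (0 : ℝ) a ×ˢ Set.Icc (x₀ - M * a) (x₀ + M * a))
    (f : ℝ × ℝ → ℝ)
    (hf_lip : ∀ u ∈ U, ∀ v ∈ U, |f u - f v| ≤ L * (|u.1 - v.1| + |u.2 - v.2|))
    (hf_bdd : ∀ u ∈ U, |f u| ≤ M)
    (X : ℕ → ℕ → ℝ)
    (hX0 : ∀ m, X m 0 = x₀)
    (hXs : ∀ m k, X m (k + 1) = X m k + a / 2 ^ m * f (a * k / 2 ^ m, X m k)) :
    ∀ m k : ℕ, k ≤ 2 ^ m →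
      |X m k - x₀| ≤ M * (a * k / 2 ^ m) ∧
      M * (a * k / 2 ^ m) ≤ M * a ∧
      (a * k / 2 ^ m, X m k) ∈ U :=
  euler_iterates_in_U_general a M x₀ ha hM U hU f hf_bdd X hX0 hXs
end

section
/- For every m ∈ ℕ and all j, k ∈ ℕ with j ≤ 2^m and k ≤ 2^m, the Euler iterates satisfy |X^m_j − X^m_k| ≤ M·|a·j/2^m − a·k/2^m|. -/
open Filter Topology Set

/-- For every m and j, k ≤ 2^m,
|X^m_j − X^m_k| ≤ M·|a·j/2^m − a·k/2^m|. -/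
theorem euler_iterates_lipschitz
    (a M L x₀ : ℝ) (ha : 0 < a) (hM : 0 < M) (hL : 0 < L)
    (U : Set (ℝ × ℝ))
    (hU : U = Set.Icc (0 : ℝ) a ×ˢ Set.Icc (x₀ - M * a) (x₀ + M * a))
    (f : ℝ × ℝ → ℝ)
    (hf_lip : ∀ u ∈ U, ∀ v ∈ U, |f u - f v| ≤ L * (|u.1 - v.1| + |u.2 - v.2|))
    (hf_bdd : ∀ u ∈ U, |f u| ≤ M)
    (X : ℕ → ℕ → ℝ)
    (hX0 : ∀ m, X m 0 = x₀)
    (hXs : ∀ m k, X m (k + 1) = X m k + a / 2 ^ m * f (a * k / 2 ^ m, X m k)) :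
    ∀ m j k : ℕ, j ≤ 2 ^ m → k ≤ 2 ^ m →
      |X m j - X m k| ≤ M * |a * j / 2 ^ m - a * k / 2 ^ m| := by
  intro m
  have hp : (0:ℝ) < 2 ^ m := by positivity
  -- A: distance from x₀
  have hA : ∀ k : ℕ, k ≤ 2 ^ m → |X m k - x₀| ≤ M * (a * k / 2 ^ m) := by
    intro k
    induction k with
    | zero => intro _; simp [hX0]
    | succ n ih =>
      intro hk
      have hn : n ≤ 2 ^ m := Nat.le_of_succ_le hk
      have hAn := ih hn
      have hmem : (a * n / 2 ^ m, X m n) ∈ U := by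
        rw [hU]
        constructor
        · constructor
          · positivity
          · rw [div_le_iff₀ hp]
            have : (n : ℝ) ≤ 2 ^ m := by exact_mod_cast (by exact_mod_cast hn : (n:ℝ) ≤ (2^m : ℕ))
            nlinarith
        · have h1 : M * (a * n / 2 ^ m) ≤ M * a := by
            apply mul_le_mul_of_nonneg_left _ hM.le
            rw [div_le_iff₀ hp]
            have : (n : ℝ) ≤ 2 ^ m := by exact_mod_cast (by exact_mod_cast hn : (n:ℝ) ≤ (2^m : ℕ))
            nlinarith
          have := abs_le.mp hAn
          constructor <;> simp only [Set.mem_Icc] <;> linarith [this.1, this.2]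
      have hfb := hf_bdd _ hmem
      have key : |X m (n+1) - x₀| ≤ |X m n - x₀| + (a / 2^m) * |f (a * n / 2 ^ m, X m n)| := by
        rw [hXs]
        calc |X m n + a / 2 ^ m * f (a * ↑n / 2 ^ m, X m n) - x₀|
            ≤ |X m n - x₀| + |a / 2 ^ m * f (a * ↑n / 2 ^ m, X m n)| := by
              rw [show X m n + a / 2 ^ m * f (a * ↑n / 2 ^ m, X m n) - x₀
                = (X m n - x₀) + a / 2 ^ m * f (a * ↑n / 2 ^ m, X m n) by ring]
              exact abs_add_le _ _
          _ = |X m n - x₀| + (a / 2^m) * |f (a * ↑n / 2 ^ m, X m n)| := by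
              rw [abs_mul, abs_of_pos (by positivity : (0:ℝ) < a / 2^m)]
      have h2 : (a / 2^m) * |f (a * n / 2 ^ m, X m n)| ≤ (a / 2^m) * M :=
        mul_le_mul_of_nonneg_left hfb (by positivity)
      push_cast
      calc |X m (n+1) - x₀| ≤ M * (a * n / 2 ^ m) + (a / 2^m) * M := by linarith
        _ = M * (a * (n+1) / 2 ^ m) := by ring
  -- B: ordered case
  have hB : ∀ j k : ℕ, k ≤ j → j ≤ 2 ^ m →
      |X m j - X m k| ≤ M * (a * j / 2 ^ m - a * k / 2 ^ m) := by
    intro j k hkj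
    induction j, hkj using Nat.le_induction with
    | base => intro _; simp
    | succ n hn ih =>
      intro hn1
      have hnle : n ≤ 2 ^ m := Nat.le_of_succ_le hn1
      have hBn := ih hnle
      have hAn := hA n hnle
      have hmem : (a * n / 2 ^ m, X m n) ∈ U := by
        rw [hU]
        constructor
        · constructor
          · positivity
          · rw [div_le_iff₀ hp]
            have : (n : ℝ) ≤ 2 ^ m := by exact_mod_cast (by exact_mod_cast hnle : (n:ℝ) ≤ (2^m : ℕ))
            nlinarith
        · have h1 : M * (a * n / 2 ^ m) ≤ M * a := by
            apply mul_le_mul_of_nonneg_left _ hM.le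
            rw [div_le_iff₀ hp]
            have : (n : ℝ) ≤ 2 ^ m := by exact_mod_cast (by exact_mod_cast hnle : (n:ℝ) ≤ (2^m : ℕ))
            nlinarith
          have := abs_le.mp hAn
          constructor <;> simp only [Set.mem_Icc] <;> linarith [this.1, this.2]
      have hfb := hf_bdd _ hmem
      have key : |X m (n+1) - X m k| ≤ |X m n - X m k| + (a / 2^m) * |f (a * n / 2 ^ m, X m n)| := by
        rw [hXs]
        calc |X m n + a / 2 ^ m * f (a * ↑n / 2 ^ m, X m n) - X m k|
            ≤ |X m n - X m k| + |a / 2 ^ m * f (a * ↑n / 2 ^ m, X m n)| := by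
              rw [show X m n + a / 2 ^ m * f (a * ↑n / 2 ^ m, X m n) - X m k
                = (X m n - X m k) + a / 2 ^ m * f (a * ↑n / 2 ^ m, X m n) by ring]
              exact abs_add_le _ _
          _ = |X m n - X m k| + (a / 2^m) * |f (a * ↑n / 2 ^ m, X m n)| := by
              rw [abs_mul, abs_of_pos (by positivity : (0:ℝ) < a / 2^m)]
      have h2 : (a / 2^m) * |f (a * n / 2 ^ m, X m n)| ≤ (a / 2^m) * M :=
        mul_le_mul_of_nonneg_left hfb (by positivity)
      push_cast
      calc |X m (n+1) - X m k|
          ≤ M * (a * n / 2 ^ m - a * k / 2 ^ m) + (a / 2^m) * M := by linarith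
        _ = M * (a * (n+1) / 2 ^ m - a * k / 2 ^ m) := by ring
  intro j k hj hk
  rcases le_total k j with h | h
  · have hjk : (k:ℝ) ≤ j := by exact_mod_cast h
    have habs : |a * (j:ℝ) / 2 ^ m - a * k / 2 ^ m| = a * j / 2 ^ m - a * k / 2 ^ m := by
      apply abs_of_nonneg
      apply sub_nonneg.mpr
      apply div_le_div_of_nonneg_right _ hp.le
      nlinarith
    rw [habs]
    exact hB j k h hj
  · have hjk : (j:ℝ) ≤ k := by exact_mod_cast h
    rw [abs_sub_comm (X m j), abs_sub_comm (a * (j:ℝ) / 2 ^ m)]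
    have habs : |a * (k:ℝ) / 2 ^ m - a * j / 2 ^ m| = a * k / 2 ^ m - a * j / 2 ^ m := by
      apply abs_of_nonneg
      apply sub_nonneg.mpr
      apply div_le_div_of_nonneg_right _ hp.le
      nlinarith
    rw [habs]
    exact hB k j h hk
end

section
/- Let C = a·(M+1)·(e^{aL}·(1 + aL) − 1)/4. Then for every m ∈ ℕ and every k ∈ ℕ with k ≤ 2^m, the consecutive refinements of the Euler scheme at the dyadic point a·k/2^m satisfy |X^{m+1}_{2k} − X^m_k| ≤ C/2^m. -/
open Set

/-!
Both schemes start at `x₀`; one step of size `h` of the coarse scheme is compared with two half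
steps of the fine one. As long as the iterates stay in the box `U` (they do, since `|f| ≤ M`),
the Lipschitz bound shows that the difference `e` of the two schemes satisfies
`|e_{j+1}| ≤ (1 + hL) |e_j| + h² L (M + 1) / 4`. Summing this recursion gives
`|e_k| ≤ h (M + 1) / 4 · ((1 + hL)^k - 1)`, and `(1 + hL)^k ≤ e^{aL}` for `k h ≤ a`.
-/

noncomputable def eulerSeq (f : ℝ × ℝ → ℝ) (h x₀ : ℝ) : ℕ → ℝ
  | 0 => x₀
  | k + 1 => eulerSeq f h x₀ k + h * f (k * h, eulerSeq f h x₀ k)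

lemma eulerSeq_eq_of_recursion {f : ℝ × ℝ → ℝ} {h x₀ : ℝ} {Y : ℕ → ℝ}
    (h0 : Y 0 = x₀)
    (hs : ∀ k, Y (k + 1) = Y k + h * f (k * h, Y k)) : Y = eulerSeq f h x₀ := by
  funext k
  induction k with
  | zero => exact h0
  | succ k ih => rw [hs, ih, eulerSeq]

lemma le_mul_one_add_pow_sub_one {e : ℕ → ℝ} {b c : ℝ} (hc : 0 ≤ c) (h0 : e 0 ≤ 0) :
    ∀ n, (∀ j < n, e (j + 1) ≤ (1 + c) * e j + c * b) → e n ≤ b * ((1 + c) ^ n - 1) := by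
  intro n
  induction n with
  | zero => intro _; simpa using h0
  | succ n ih =>
    intro hs
    calc e (n + 1) ≤ (1 + c) * e n + c * b := hs n n.lt_succ_self
      _ ≤ (1 + c) * (b * ((1 + c) ^ n - 1)) + c * b := by
          gcongr
          exact ih fun j hj => hs j (hj.trans n.lt_succ_self)
      _ = b * ((1 + c) ^ (n + 1) - 1) := by ring

lemma one_add_pow_le_exp_mul {c : ℝ} (hc : 0 ≤ c) (n : ℕ) :
    (1 + c) ^ n ≤ Real.exp (n * c) := by
  rw [Real.exp_nat_mul]
  gcongr
  linarith [Real.add_one_le_exp c]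

def eulerBox (x₀ M T : ℝ) : Set (ℝ × ℝ) := Icc 0 T ×ˢ Icc (x₀ - M * T) (x₀ + M * T)

section EulerScheme

variable {f : ℝ × ℝ → ℝ} {x₀ M L T h : ℝ}

lemma mem_eulerBox_of_abs_sub_le (hM : 0 ≤ M) {t y : ℝ} (ht : t ∈ Icc 0 T)
    (hy : |y - x₀| ≤ M * t) :
    (t, y) ∈ eulerBox x₀ M T := by
  have hMt : M * t ≤ M * T := mul_le_mul_of_nonneg_left ht.2 hM
  refine ⟨ht, ?_, ?_⟩ <;> linarith [abs_le.mp hy]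

lemma abs_eulerSeq_sub_le (hM : 0 ≤ M) (hh : 0 ≤ h)
    (hf_bdd : ∀ u ∈ eulerBox x₀ M T, |f u| ≤ M) :
    ∀ j : ℕ, j * h ≤ T → |eulerSeq f h x₀ j - x₀| ≤ M * (j * h) := by
  intro j
  induction j with
  | zero => intro _; simp [eulerSeq]
  | succ j ih =>
    intro hjT
    push_cast at hjT
    have hj : (j : ℝ) * h ≤ T := by linarith
    have hmem := mem_eulerBox_of_abs_sub_le hM ⟨by positivity, hj⟩ (ih hj)
    calc |eulerSeq f h x₀ (j + 1) - x₀|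
        = |(eulerSeq f h x₀ j - x₀) + h * f (j * h, eulerSeq f h x₀ j)| := by
          rw [eulerSeq]; congr 1; ring
      _ ≤ |eulerSeq f h x₀ j - x₀| + h * |f (j * h, eulerSeq f h x₀ j)| := by
          rw [← abs_of_nonneg hh, ← abs_mul, abs_of_nonneg hh]; exact abs_add_le _ _
      _ ≤ M * (j * h) + h * M := by gcongr; exacts [ih hj, hf_bdd _ hmem]
      _ = M * ((j + 1 : ℕ) * h) := by push_cast; ring

lemma eulerSeq_mem_eulerBox (hM : 0 ≤ M) (hh : 0 ≤ h)
    (hf_bdd : ∀ u ∈ eulerBox x₀ M T, |f u| ≤ M) {j : ℕ}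
    (hj : j * h ≤ T) :
    ((j : ℝ) * h, eulerSeq f h x₀ j) ∈ eulerBox x₀ M T :=
  mem_eulerBox_of_abs_sub_le hM ⟨by positivity, hj⟩ (abs_eulerSeq_sub_le hM hh hf_bdd j hj)

lemma abs_two_half_steps_sub_step_le {U : Set (ℝ × ℝ)} (hL : 0 ≤ L) (hh : 0 ≤ h)
    (hf_lip : ∀ u ∈ U, ∀ v ∈ U, |f u - f v| ≤ L * (|u.1 - v.1| + |u.2 - v.2|))
    (hf_bdd : ∀ u ∈ U, |f u| ≤ M) {t y z : ℝ} (hy : (t, y) ∈ U) (hz : (t, z) ∈ U)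
    (hz' : (t + h / 2, z + h / 2 * f (t, z)) ∈ U) :
    |z + h / 2 * f (t, z) + h / 2 * f (t + h / 2, z + h / 2 * f (t, z)) - (y + h * f (t, y))|
      ≤ (1 + h * L) * |z - y| + h * L * (h * (M + 1) / 4) := by
  set z' := z + h / 2 * f (t, z) with hz'_def
  have hh2 : 0 ≤ h / 2 := by positivity
  have hΔ₁ : |f (t, z) - f (t, y)| ≤ L * |z - y| := by
    simpa using hf_lip _ hz _ hy
  have hz'y : |z' - y| ≤ |z - y| + h / 2 * M := by
    calc |z' - y| = |(z - y) + h / 2 * f (t, z)| := by rw [hz'_def]; congr 1; ring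
      _ ≤ |z - y| + h / 2 * |f (t, z)| := by
          rw [← abs_of_nonneg hh2, ← abs_mul, abs_of_nonneg hh2]; exact abs_add_le _ _
      _ ≤ |z - y| + h / 2 * M := by gcongr; exact hf_bdd _ hz
  have hΔ₂ : |f (t + h / 2, z') - f (t, y)| ≤ L * (h / 2 + (|z - y| + h / 2 * M)) := by
    calc |f (t + h / 2, z') - f (t, y)| ≤ L * (|t + h / 2 - t| + |z' - y|) := hf_lip _ hz' _ hy
      _ ≤ L * (h / 2 + (|z - y| + h / 2 * M)) := by
          rw [add_sub_cancel_left, abs_of_nonneg hh2]; gcongr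
  calc |z' + h / 2 * f (t + h / 2, z') - (y + h * f (t, y))|
      = |(z - y) + h / 2 * (f (t, z) - f (t, y)) + h / 2 * (f (t + h / 2, z') - f (t, y))| := by
        congr 1; ring
    _ ≤ |z - y| + h / 2 * |f (t, z) - f (t, y)| + h / 2 * |f (t + h / 2, z') - f (t, y)| := by
        rw [← abs_of_nonneg hh2, ← abs_mul, ← abs_mul, abs_of_nonneg hh2]
        exact (abs_add_le _ _).trans (by gcongr; exact abs_add_le _ _)
    _ ≤ |z - y| + h / 2 * (L * |z - y|) + h / 2 * (L * (h / 2 + (|z - y| + h / 2 * M))) := by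
        gcongr
    _ = (1 + h * L) * |z - y| + h * L * (h * (M + 1) / 4) := by ring

lemma abs_eulerSeq_half_sub_le (hM : 0 ≤ M) (hL : 0 ≤ L) (hh : 0 ≤ h)
    (hf_lip : ∀ u ∈ eulerBox x₀ M T, ∀ v ∈ eulerBox x₀ M T,
      |f u - f v| ≤ L * (|u.1 - v.1| + |u.2 - v.2|))
    (hf_bdd : ∀ u ∈ eulerBox x₀ M T, |f u| ≤ M) {n : ℕ}
    (hn : n * h ≤ T) :
    |eulerSeq f (h / 2) x₀ (2 * n) - eulerSeq f h x₀ n|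
      ≤ h * (M + 1) / 4 * ((1 + h * L) ^ n - 1) := by
  refine le_mul_one_add_pow_sub_one
    (e := fun j => |eulerSeq f (h / 2) x₀ (2 * j) - eulerSeq f h x₀ j|)
    (by positivity) (by simp [eulerSeq]) n fun j hj => ?_
  have hjT : (j + 1 : ℝ) * h ≤ T := le_trans (by gcongr; exact_mod_cast hj) hn
  have ht₁ : ((2 * j : ℕ) : ℝ) * (h / 2) = j * h := by push_cast; ring
  have ht₂ : ((2 * j + 1 : ℕ) : ℝ) * (h / 2) = j * h + h / 2 := by push_cast; ring
  have hh₂ : 0 ≤ h / 2 := by positivity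
  have hy := eulerSeq_mem_eulerBox hM hh hf_bdd (j := j) (by linarith)
  have hz := eulerSeq_mem_eulerBox hM hh₂ hf_bdd (j := 2 * j) (by rw [ht₁]; linarith)
  have hz' := eulerSeq_mem_eulerBox hM hh₂ hf_bdd (j := 2 * j + 1) (by rw [ht₂]; linarith)
  rw [ht₁] at hz
  rw [ht₂, eulerSeq, ht₁] at hz'
  simpa only [show 2 * (j + 1) = 2 * j + 1 + 1 by ring, eulerSeq, ht₁, ht₂] using
    abs_two_half_steps_sub_step_le hL hh hf_lip hf_bdd hy hz hz'

end EulerScheme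

/-- With C = a·(M+1)·(e^{aL}·(1+aL) − 1)/4, for every m and k ≤ 2^m,
|X^{m+1}_{2k} − X^m_k| ≤ C/2^m. -/
theorem euler_refinement_estimate
    (a M L x₀ : ℝ) (ha : 0 < a) (hM : 0 < M) (hL : 0 < L)
    (U : Set (ℝ × ℝ))
    (hU : U = Set.Icc (0 : ℝ) a ×ˢ Set.Icc (x₀ - M * a) (x₀ + M * a))
    (f : ℝ × ℝ → ℝ)
    (hf_lip : ∀ u ∈ U, ∀ v ∈ U, |f u - f v| ≤ L * (|u.1 - v.1| + |u.2 - v.2|))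
    (hf_bdd : ∀ u ∈ U, |f u| ≤ M)
    (X : ℕ → ℕ → ℝ)
    (hX0 : ∀ m, X m 0 = x₀)
    (hXs : ∀ m k, X m (k + 1) = X m k + a / 2 ^ m * f (a * k / 2 ^ m, X m k))
    (C : ℝ) (hC : C = a * (M + 1) * (Real.exp (a * L) * (1 + a * L) - 1) / 4) :
    ∀ m k : ℕ, k ≤ 2 ^ m → |X (m + 1) (2 * k) - X m k| ≤ C / 2 ^ m := by
  subst hU hC
  have hX : ∀ m, X m = eulerSeq f (a / 2 ^ m) x₀ := fun m =>
    eulerSeq_eq_of_recursion (hX0 m) fun k => by rw [hXs, mul_div_right_comm, mul_comm _ (k : ℝ)]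
  intro m k hk
  set h := a / 2 ^ m with hh_def
  have hh : 0 < h := by positivity
  have hkR : (k : ℝ) ≤ 2 ^ m := by exact_mod_cast hk
  have hkh : k * h ≤ a := by
    calc (k : ℝ) * h ≤ 2 ^ m * h := by gcongr
      _ = a := by rw [hh_def]; field_simp
  have hpow : (1 + h * L) ^ k ≤ Real.exp (a * L) :=
    calc (1 + h * L) ^ k ≤ Real.exp (k * (h * L)) := one_add_pow_le_exp_mul (by positivity) k
      _ ≤ Real.exp (a * L) := by rw [← mul_assoc]; gcongr
  have hexp : Real.exp (a * L) ≤ Real.exp (a * L) * (1 + a * L) :=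
    le_mul_of_one_le_right (Real.exp_pos _).le (by nlinarith)
  rw [hX, hX, show a / 2 ^ (m + 1) = h / 2 by rw [hh_def, pow_succ]; ring]
  calc _ ≤ h * (M + 1) / 4 * ((1 + h * L) ^ k - 1) :=
        abs_eulerSeq_half_sub_le hM.le hL.le hh.le hf_lip hf_bdd hkh
    _ ≤ h * (M + 1) / 4 * (Real.exp (a * L) * (1 + a * L) - 1) := by gcongr; linarith
    _ = _ := by ring
end

section
/- For all m ∈ ℕ and all j, k ∈ ℕ with j ≤ 2^m and k ≤ 2^m, the dyadic limit values x_c = lim_{n→∞} X^{m+n}_{2^n·j} (at c = a·j/2^m) and x_d = lim_{n→∞} X^{m+n}_{2^n·k} (at d = a·k/2^m) satisfy |x_c − x_d| ≤ M·|c − d|. -/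
open Filter Topology Set

/-!
Let `h = a / 2^m`. As long as the Euler polygon `X^m` stays in the band `|x - x₀| ≤ M·t` it
stays in `U`, so each increment is `h·f(…)` with `|f| ≤ M`; by induction it therefore never
leaves the band, and `X^m` is `M`-Lipschitz in time on its grid. The dyadic point `a·j/2^m` is
the grid point `2^n·j` of level `m + n`, so the bound survives refinement and passes to the limit.
-/

section Increments

variable {α : Type*} [PseudoMetricSpace α] {x : ℕ → α} {C : ℝ}

theorem dist_le_mul_of_dist_succ_le {i j : ℕ} (hij : i ≤ j)
    (hx : ∀ k, i ≤ k → k < j → dist (x k) (x (k + 1)) ≤ C) :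
    dist (x i) (x j) ≤ C * (j - i) := by
  refine (dist_le_Ico_sum_of_dist_le hij fun {k} hik hkj => hx k hik hkj).trans_eq ?_
  rw [Finset.sum_const, Nat.card_Ico, nsmul_eq_mul, Nat.cast_sub hij, mul_comm]

theorem forall_dist_succ_le_of_forall_dist_le_imp {N : ℕ}
    (hx : ∀ k < N, dist (x 0) (x k) ≤ C * k → dist (x k) (x (k + 1)) ≤ C) :
    ∀ k < N, dist (x k) (x (k + 1)) ≤ C := by
  intro k
  induction k using Nat.strong_induction_on with
  | _ k ih =>
    intro hk
    refine hx k hk ?_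
    simpa using dist_le_mul_of_dist_succ_le (Nat.zero_le k) fun l _ hl => ih l hl (hl.trans hk)

end Increments

theorem euler_dist_le {f : ℝ × ℝ → ℝ} {x : ℕ → ℝ} {a h M x₀ : ℝ} {N : ℕ}
    (hh : 0 ≤ h) (hM : 0 ≤ M) (hNa : h * N ≤ a)
    (hf : ∀ u ∈ Icc 0 a ×ˢ Icc (x₀ - M * a) (x₀ + M * a), |f u| ≤ M)
    (hx0 : x 0 = x₀) (hx : ∀ k, x (k + 1) = x k + h * f (h * k, x k))
    {i j : ℕ} (hi : i ≤ N) (hj : j ≤ N) :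
    dist (x i) (x j) ≤ M * dist (h * i) (h * j) := by
  have hstep : ∀ k < N, dist (x k) (x (k + 1)) ≤ M * h := by
    refine forall_dist_succ_le_of_forall_dist_le_imp fun k hk hband => ?_
    have htime : h * k ≤ a :=
      (mul_le_mul_of_nonneg_left (by exact_mod_cast hk.le) hh).trans hNa
    have hspace : |x₀ - x k| ≤ M * a := by
      rw [← hx0, ← Real.dist_eq]
      exact hband.trans (by rw [mul_assoc]; exact mul_le_mul_of_nonneg_left htime hM)
    have hmem : (h * k, x k) ∈ Icc 0 a ×ˢ Icc (x₀ - M * a) (x₀ + M * a) := by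
      obtain ⟨hlo, hhi⟩ := abs_sub_le_iff.1 hspace
      exact ⟨⟨by positivity, htime⟩, by constructor <;> linarith⟩
    rw [hx, Real.dist_eq, sub_add_cancel_left, abs_neg, abs_mul, abs_of_nonneg hh, mul_comm M]
    exact mul_le_mul_of_nonneg_left (hf _ hmem) hh
  wlog hij : i ≤ j generalizing i j
  · rw [dist_comm, dist_comm (h * i)]
    exact this hj hi (le_of_not_ge hij)
  calc dist (x i) (x j) ≤ M * h * (j - i) :=
        dist_le_mul_of_dist_succ_le hij fun k _ hk => hstep k (hk.trans_le hj)
    _ = M * dist (h * i) (h * j) := by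
        rw [Real.dist_eq, ← mul_sub, abs_mul, abs_of_nonneg hh, abs_sub_comm,
          abs_of_nonneg (sub_nonneg.2 (by exact_mod_cast hij))]
        ring

theorem div_two_pow_add_mul_cast_two_pow_mul (a : ℝ) (m n j : ℕ) :
    a / 2 ^ (m + n) * ((2 ^ n * j : ℕ) : ℝ) = a * j / 2 ^ m := by
  push_cast
  rw [pow_add]
  field_simp

theorem dyadic_limits_lipschitz_general
    (a M x₀ : ℝ) (ha : 0 < a) (hM : 0 < M)
    (U : Set (ℝ × ℝ))
    (hU : U = Set.Icc (0 : ℝ) a ×ˢ Set.Icc (x₀ - M * a) (x₀ + M * a))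
    (f : ℝ × ℝ → ℝ)
    (hf_bdd : ∀ u ∈ U, |f u| ≤ M)
    (X : ℕ → ℕ → ℝ)
    (hX0 : ∀ m, X m 0 = x₀)
    (hXs : ∀ m k, X m (k + 1) = X m k + a / 2 ^ m * f (a * k / 2 ^ m, X m k)) :
    ∀ m j k : ℕ, j ≤ 2 ^ m → k ≤ 2 ^ m →
      ∀ xc xd : ℝ,
        Tendsto (fun n : ℕ => X (m + n) (2 ^ n * j)) atTop (𝓝 xc) →
        Tendsto (fun n : ℕ => X (m + n) (2 ^ n * k)) atTop (𝓝 xd) →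
        |xc - xd| ≤ M * |a * j / 2 ^ m - a * k / 2 ^ m| := by
  intro m j k hj hk xc xd hc hd
  subst hU
  have hrefine : ∀ n {i : ℕ}, i ≤ 2 ^ m → 2 ^ n * i ≤ 2 ^ (m + n) := fun n i hi => by
    rw [pow_add, mul_comm (2 ^ m)]
    exact Nat.mul_le_mul_left _ hi
  have hgrid : ∀ n, dist (X (m + n) (2 ^ n * j)) (X (m + n) (2 ^ n * k)) ≤
      M * |a * j / 2 ^ m - a * k / 2 ^ m| := fun n => by
    have := euler_dist_le (x := X (m + n)) (h := a / 2 ^ (m + n)) (N := 2 ^ (m + n))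
      (by positivity) hM.le (by push_cast; exact (div_mul_cancel₀ a (by positivity)).le) hf_bdd (hX0 _) (fun i => by rw [hXs, mul_div_right_comm])
      (hrefine n hj) (hrefine n hk)
    rwa [div_two_pow_add_mul_cast_two_pow_mul, div_two_pow_add_mul_cast_two_pow_mul,
      Real.dist_eq] at this
  rw [← Real.dist_eq]
  exact le_of_tendsto (hc.dist hd) (Eventually.of_forall hgrid)

/-- The dyadic limit values x_c (at c = a·j/2^m) and x_d (at d = a·k/2^m)
satisfy |x_c − x_d| ≤ M·|c − d|. -/
theorem dyadic_limits_lipschitz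
    (a M L x₀ : ℝ) (ha : 0 < a) (hM : 0 < M) (hL : 0 < L)
    (U : Set (ℝ × ℝ))
    (hU : U = Set.Icc (0 : ℝ) a ×ˢ Set.Icc (x₀ - M * a) (x₀ + M * a))
    (f : ℝ × ℝ → ℝ)
    (hf_lip : ∀ u ∈ U, ∀ v ∈ U, |f u - f v| ≤ L * (|u.1 - v.1| + |u.2 - v.2|))
    (hf_bdd : ∀ u ∈ U, |f u| ≤ M)
    (X : ℕ → ℕ → ℝ)
    (hX0 : ∀ m, X m 0 = x₀)
    (hXs : ∀ m k, X m (k + 1) = X m k + a / 2 ^ m * f (a * k / 2 ^ m, X m k)) :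
    ∀ m j k : ℕ, j ≤ 2 ^ m → k ≤ 2 ^ m →
      ∀ xc xd : ℝ,
        Tendsto (fun n : ℕ => X (m + n) (2 ^ n * j)) atTop (𝓝 xc) →
        Tendsto (fun n : ℕ => X (m + n) (2 ^ n * k)) atTop (𝓝 xd) →
        |xc - xd| ≤ M * |a * j / 2 ^ m - a * k / 2 ^ m| :=
  dyadic_limits_lipschitz_general a M x₀ ha hM U hU f hf_bdd X hX0 hXs
end

section
/- Let D = {a·k/2^m : m ∈ ℕ, 0 ≤ k ≤ 2^m} be the set of dyadic points of [0,a], and for d ∈ D let x_d denote the limit of the Euler approximations at d. If (c_n) and (d_n) are sequences in D converging to the same point t ∈ [0,a], then the sequences (x_{c_n}) and (x_{d_n}) both converge and have the same limit. -/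
/-!
An Euler step moves the iterate by at most `h * M`, as long as it stays in the strip where
`|f| ≤ M`; by induction every Euler polygon on `[0, a]` stays there, so it is `M`-Lipschitz in
time. Passing to the limit, `d ↦ x_d` is `M`-Lipschitz on the dyadic points; by McShane it is the
restriction of an `M`-Lipschitz function `g` on `ℝ`, and both sequences converge to `g t`.
-/

open Filter Topology Set

theorem abs_sub_le_mul_of_abs_succ_sub_le {x : ℕ → ℝ} {C : ℝ} {n : ℕ}
    (hx : ∀ k < n, |x (k + 1) - x k| ≤ C) {j k : ℕ} (hj : j ≤ n) (hk : k ≤ n) :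
    |x k - x j| ≤ C * |(k : ℝ) - j| := by
  wlog hjk : j ≤ k generalizing j k
  · rw [abs_sub_comm, abs_sub_comm (k : ℝ)]
    exact this hk hj (by omega)
  have hsum := dist_le_Ico_sum_of_dist_le hjk (f := x) (d := fun _ => C) fun _ hik => by
    rw [dist_comm, Real.dist_eq]
    exact hx _ (by omega)
  rw [Real.dist_eq, abs_sub_comm, Finset.sum_const, Nat.card_Ico, nsmul_eq_mul] at hsum
  rwa [abs_of_nonneg (sub_nonneg.2 (Nat.cast_le.2 hjk)), ← Nat.cast_sub hjk, mul_comm]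

theorem euler_abs_succ_sub_le {f : ℝ × ℝ → ℝ} {x t : ℕ → ℝ} {x₀ h M T : ℝ} {n : ℕ}
    (hh : 0 ≤ h) (hM : 0 ≤ M) (hnT : n * h ≤ T) (ht : ∀ k < n, t k ∈ Icc 0 T)
    (hf : ∀ u ∈ Icc 0 T ×ˢ Icc (x₀ - M * T) (x₀ + M * T), |f u| ≤ M)
    (h0 : x 0 = x₀) (hs : ∀ k, x (k + 1) = x k + h * f (t k, x k)) :
    ∀ k < n, |x (k + 1) - x k| ≤ M * h := by
  suffices ∀ m ≤ n, ∀ k < m, |x (k + 1) - x k| ≤ M * h from this n le_rfl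
  intro m hm
  induction m with
  | zero => simp
  | succ m ih =>
    have hsteps := ih (by omega)
    intro k hk
    rcases Nat.lt_succ_iff_lt_or_eq.mp hk with hk | rfl
    · exact hsteps k hk
    have hdrift : |x k - x₀| ≤ M * T := calc
      |x k - x₀| ≤ M * h * |(k : ℝ) - (0 : ℕ)| :=
        h0 ▸ abs_sub_le_mul_of_abs_succ_sub_le hsteps (Nat.zero_le _) le_rfl
      _ ≤ M * (n * h) := by
        rw [Nat.cast_zero, sub_zero, Nat.abs_cast, mul_comm (n : ℝ), ← mul_assoc]
        gcongr
        exact_mod_cast (by omega : k ≤ n)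
      _ ≤ M * T := by gcongr
    have hfk : |f (t k, x k)| ≤ M :=
      hf _ ⟨ht k (by omega), by constructor <;> linarith [abs_le.mp hdrift]⟩
    rw [hs, add_sub_cancel_left, abs_mul, abs_of_nonneg hh, mul_comm M]
    gcongr

theorem euler_dyadic_abs_sub_le {f : ℝ × ℝ → ℝ} {x : ℕ → ℝ} {a M x₀ : ℝ} {m : ℕ}
    (ha : 0 ≤ a) (hM : 0 ≤ M)
    (hf : ∀ u ∈ Icc 0 a ×ˢ Icc (x₀ - M * a) (x₀ + M * a), |f u| ≤ M)
    (h0 : x 0 = x₀) (hs : ∀ k, x (k + 1) = x k + a / 2 ^ m * f (a * k / 2 ^ m, x k))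
    {j k : ℕ} (hj : j ≤ 2 ^ m) (hk : k ≤ 2 ^ m) :
    |x k - x j| ≤ M * |a * k / 2 ^ m - a * j / 2 ^ m| := by
  have hpow : (0 : ℝ) < 2 ^ m := by positivity
  have hgrid : ∀ i : ℕ, i < 2 ^ m → a * i / 2 ^ m ∈ Icc 0 a := fun i hi =>
    ⟨div_nonneg (mul_nonneg ha i.cast_nonneg) hpow.le,
      (div_le_iff₀ hpow).2 (by gcongr; exact_mod_cast hi.le)⟩
  have hsteps := euler_abs_succ_sub_le (n := 2 ^ m) (div_nonneg ha hpow.le) hM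
    (le_of_eq (by push_cast; field_simp)) hgrid hf h0 hs
  calc |x k - x j| ≤ M * (a / 2 ^ m) * |(k : ℝ) - j| :=
        abs_sub_le_mul_of_abs_succ_sub_le hsteps hj hk
    _ = M * |a * k / 2 ^ m - a * j / 2 ^ m| := by
        rw [← sub_div, ← mul_sub, abs_div, abs_mul, abs_of_nonneg ha, abs_of_pos hpow]
        ring

def dyadicPoints (a : ℝ) : Set ℝ := {r | ∃ m k : ℕ, k ≤ 2 ^ m ∧ r = a * k / 2 ^ m}

theorem dyadic_refine (a : ℝ) (m n k : ℕ) :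
    a * ((2 ^ n * k : ℕ) : ℝ) / 2 ^ (m + n) = a * k / 2 ^ m := by
  push_cast
  rw [pow_add]
  field_simp

theorem exists_common_denominator_of_mem_dyadicPoints {a r s : ℝ} (hr : r ∈ dyadicPoints a)
    (hs : s ∈ dyadicPoints a) :
    ∃ m k l : ℕ, k ≤ 2 ^ m ∧ l ≤ 2 ^ m ∧ r = a * k / 2 ^ m ∧ s = a * l / 2 ^ m := by
  obtain ⟨m, k, hk, rfl⟩ := hr
  obtain ⟨n, l, hl, rfl⟩ := hs
  refine ⟨m + n, 2 ^ n * k, 2 ^ m * l, ?_, ?_, (dyadic_refine a m n k).symm, ?_⟩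
  · rw [pow_add, mul_comm (2 ^ m)]
    exact Nat.mul_le_mul_left _ hk
  · rw [pow_add]
    exact Nat.mul_le_mul_left _ hl
  · rw [add_comm]
    exact (dyadic_refine a n m l).symm

theorem lipschitzOnWith_dyadicPoints_of_tendsto_euler {f : ℝ × ℝ → ℝ} {X : ℕ → ℕ → ℝ}
    {xd : ℝ → ℝ} {a M x₀ : ℝ} (ha : 0 ≤ a) (hM : 0 ≤ M)
    (hf : ∀ u ∈ Icc 0 a ×ˢ Icc (x₀ - M * a) (x₀ + M * a), |f u| ≤ M)
    (hX0 : ∀ m, X m 0 = x₀)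
    (hXs : ∀ m k, X m (k + 1) = X m k + a / 2 ^ m * f (a * k / 2 ^ m, X m k))
    (hxd : ∀ m k : ℕ, k ≤ 2 ^ m →
      Tendsto (fun n : ℕ => X (m + n) (2 ^ n * k)) atTop (𝓝 (xd (a * k / 2 ^ m)))) :
    LipschitzOnWith (Real.toNNReal M) xd (dyadicPoints a) := by
  refine LipschitzOnWith.of_dist_le' fun r hr s hs => ?_
  obtain ⟨m, k, l, hk, hl, rfl, rfl⟩ := exists_common_denominator_of_mem_dyadicPoints hr hs
  refine le_of_tendsto' ((hxd m k hk).dist (hxd m l hl)) fun n => ?_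
  have hrefine : ∀ {i}, i ≤ 2 ^ m → 2 ^ n * i ≤ 2 ^ (m + n) := fun hi => by
    rw [pow_add, mul_comm (2 ^ m)]
    exact Nat.mul_le_mul_left _ hi
  have := euler_dyadic_abs_sub_le ha hM hf (hX0 (m + n)) (hXs (m + n)) (hrefine hl) (hrefine hk)
  rwa [dyadic_refine, dyadic_refine, ← Real.dist_eq, ← Real.dist_eq] at this

theorem LipschitzOnWith.exists_forall_tendsto_comp {α ι : Type*} [PseudoMetricSpace α]
    {K : NNReal} {g : α → ℝ} {s : Set α} (hg : LipschitzOnWith K g s) (t : α) :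
    ∃ ℓ, ∀ {l : Filter ι} {c : ι → α}, (∀ i, c i ∈ s) → Tendsto c l (𝓝 t) →
      Tendsto (g ∘ c) l (𝓝 ℓ) := by
  obtain ⟨G, hG, hgG⟩ := hg.extend_real
  refine ⟨G t, fun hc hct => ?_⟩
  rw [show g ∘ _ = G ∘ _ from funext fun i => hgG (hc i)]
  exact (hG.continuous.tendsto t).comp hct

theorem dyadic_limits_along_sequences_general
    (a M x₀ : ℝ) (ha : 0 < a) (hM : 0 < M)
    (U : Set (ℝ × ℝ))
    (hU : U = Set.Icc (0 : ℝ) a ×ˢ Set.Icc (x₀ - M * a) (x₀ + M * a))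
    (f : ℝ × ℝ → ℝ)
    (hf_bdd : ∀ u ∈ U, |f u| ≤ M)
    (X : ℕ → ℕ → ℝ)
    (hX0 : ∀ m, X m 0 = x₀)
    (hXs : ∀ m k, X m (k + 1) = X m k + a / 2 ^ m * f (a * k / 2 ^ m, X m k))
    (D : Set ℝ) (hD : D = {r : ℝ | ∃ m k : ℕ, k ≤ 2 ^ m ∧ r = a * k / 2 ^ m})
    (xd : ℝ → ℝ)
    (hxd : ∀ m k : ℕ, k ≤ 2 ^ m →
      Tendsto (fun n : ℕ => X (m + n) (2 ^ n * k)) atTop (𝓝 (xd (a * k / 2 ^ m))))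
    (t : ℝ)
    (c d : ℕ → ℝ) (hc : ∀ n, c n ∈ D) (hd : ∀ n, d n ∈ D)
    (hct : Tendsto c atTop (𝓝 t)) (hdt : Tendsto d atTop (𝓝 t)) :
    ∃ ℓ : ℝ, Tendsto (fun n => xd (c n)) atTop (𝓝 ℓ) ∧
      Tendsto (fun n => xd (d n)) atTop (𝓝 ℓ) := by
  subst hU hD
  obtain ⟨ℓ, hℓ⟩ := (lipschitzOnWith_dyadicPoints_of_tendsto_euler ha.le hM.le hf_bdd hX0 hXs
    hxd).exists_forall_tendsto_comp t
  exact ⟨ℓ, hℓ hc hct, hℓ hd hdt⟩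

/-- If (c_n) and (d_n) are sequences of dyadic points in D converging to the
same point t ∈ [0,a], then (x_{c_n}) and (x_{d_n}) both converge and have the same limit. -/
theorem dyadic_limits_along_sequences
    (a M L x₀ : ℝ) (ha : 0 < a) (hM : 0 < M) (hL : 0 < L)
    (U : Set (ℝ × ℝ))
    (hU : U = Set.Icc (0 : ℝ) a ×ˢ Set.Icc (x₀ - M * a) (x₀ + M * a))
    (f : ℝ × ℝ → ℝ)
    (hf_lip : ∀ u ∈ U, ∀ v ∈ U, |f u - f v| ≤ L * (|u.1 - v.1| + |u.2 - v.2|))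
    (hf_bdd : ∀ u ∈ U, |f u| ≤ M)
    (X : ℕ → ℕ → ℝ)
    (hX0 : ∀ m, X m 0 = x₀)
    (hXs : ∀ m k, X m (k + 1) = X m k + a / 2 ^ m * f (a * k / 2 ^ m, X m k))
    (D : Set ℝ) (hD : D = {r : ℝ | ∃ m k : ℕ, k ≤ 2 ^ m ∧ r = a * k / 2 ^ m})
    (xd : ℝ → ℝ)
    (hxd : ∀ m k : ℕ, k ≤ 2 ^ m →
      Tendsto (fun n : ℕ => X (m + n) (2 ^ n * k)) atTop (𝓝 (xd (a * k / 2 ^ m))))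
    (t : ℝ) (ht : t ∈ Set.Icc (0 : ℝ) a)
    (c d : ℕ → ℝ) (hc : ∀ n, c n ∈ D) (hd : ∀ n, d n ∈ D)
    (hct : Tendsto c atTop (𝓝 t)) (hdt : Tendsto d atTop (𝓝 t)) :
    ∃ ℓ : ℝ, Tendsto (fun n => xd (c n)) atTop (𝓝 ℓ) ∧
      Tendsto (fun n => xd (d n)) atTop (𝓝 ℓ) :=
  dyadic_limits_along_sequences_general a M x₀ ha hM U hU f hf_bdd X hX0 hXs D hD xd hxd t c d hc hd
    hct hdt
end

section
/- The function x : [0,a] → ℝ is differentiable at every t ∈ [0,a] (one-sidedly at the endpoints), with derivative x'(t) = f(t, x(t)); moreover x(0) = x₀. Hence x is a solution of the initial value problem x' = f(t,x), x(0) = x₀ on [0,a]. -/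
open Filter Topology Set

/-!
On every dyadic mesh the Euler iterates stay in `U`, where `f` is bounded by `M` and
`L`-Lipschitz; hence they satisfy the local error bound
`|X_j - X_k - (t_j - t_k) f(t_k, X_k)| ≤ L (1 + M) (t_j - t_k)²` with a constant independent
of the mesh. Refining the mesh carries this bound over to `x` at dyadic points, and continuity
to all `s ≤ t` in `[0, a]`. A one-sided quadratic bound of this kind, together with the
continuity of `s ↦ f (s, x s)`, yields the derivative from both sides.
-/

theorem abs_sub_le_of_abs_succ_sub_le {y : ℕ → ℝ} {d : ℝ} {k j : ℕ} (hkj : k ≤ j)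
    (hd : ∀ i, k ≤ i → i < j → |y (i + 1) - y i| ≤ d) : |y j - y k| ≤ (j - k) * d := by
  have := dist_le_Ico_sum_of_dist_le (f := y) (d := fun _ => d) hkj fun hki hij => by
    rw [dist_comm, Real.dist_eq]; exact hd _ hki hij
  simpa [Real.dist_eq, abs_sub_comm, Nat.cast_sub hkj] using this

section Euler

variable {f : ℝ × ℝ → ℝ} {U : Set (ℝ × ℝ)} {h M L : ℝ} {y : ℕ → ℝ} {k j : ℕ}

theorem euler_abs_sub_le (hy : ∀ i, y (i + 1) = y i + h * f (i * h, y i)) (hh : 0 ≤ h)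
    (hf : ∀ u ∈ U, |f u| ≤ M) (hmem : ∀ i < j, ((i : ℝ) * h, y i) ∈ U) (hkj : k ≤ j) :
    |y j - y k| ≤ M * (j * h - k * h) := by
  have := abs_sub_le_of_abs_succ_sub_le (y := y) (d := h * M) hkj fun i _ hij => by
    rw [hy, add_sub_cancel_left, abs_mul, abs_of_nonneg hh]
    exact mul_le_mul_of_nonneg_left (hf _ (hmem i hij)) hh
  linarith

theorem euler_abs_sub_sub_le (hy : ∀ i, y (i + 1) = y i + h * f (i * h, y i)) (hh : 0 ≤ h)
    (hL : 0 ≤ L) (hf : ∀ u ∈ U, |f u| ≤ M)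
    (hf_lip : ∀ u ∈ U, ∀ v ∈ U, |f u - f v| ≤ L * (|u.1 - v.1| + |u.2 - v.2|))
    (hmem : ∀ i < j, ((i : ℝ) * h, y i) ∈ U) (hkj : k ≤ j) :
    |y j - y k - (j * h - k * h) * f (k * h, y k)| ≤ L * (1 + M) * (j * h - k * h) ^ 2 := by
  set F := f (k * h, y k)
  -- the increments of `y i - (t_i - t_k) F` are `h (f (t_i, y i) - F) = O(h (t_j - t_k))`
  have key := abs_sub_le_of_abs_succ_sub_le (y := fun i => y i - (i * h - k * h) * F)
      (d := h * (L * (1 + M) * (j * h - k * h))) hkj fun i hki hij => by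
    have hincr : y (i + 1) - ((i + 1 : ℕ) * h - k * h) * F - (y i - (i * h - k * h) * F)
        = h * (f (i * h, y i) - F) := by rw [hy]; push_cast; ring
    rw [hincr, abs_mul, abs_of_nonneg hh]
    refine mul_le_mul_of_nonneg_left ?_ hh
    have hkU := hmem k (hki.trans_lt hij)
    have hM : 0 ≤ M := (abs_nonneg _).trans (hf _ hkU)
    have hik : (k : ℝ) ≤ i := by exact_mod_cast hki
    have hij' : (i : ℝ) ≤ j := by exact_mod_cast hij.le
    calc |f (i * h, y i) - F| ≤ L * (|i * h - k * h| + |y i - y k|) :=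
          hf_lip _ (hmem i hij) _ hkU
      _ ≤ L * ((i * h - k * h) + M * (i * h - k * h)) := by
          gcongr
          · rw [abs_of_nonneg (by nlinarith)]
          · exact euler_abs_sub_le hy hh hf (fun i' hi' => hmem i' (hi'.trans hij)) hki
      _ ≤ L * (1 + M) * (j * h - k * h) := by
          rw [show i * h - k * h + M * (i * h - k * h) = (1 + M) * (i * h - k * h) by ring,
            ← mul_assoc]
          gcongr
  convert key using 1
  · simp only [sub_self, zero_mul, sub_zero]
    ring_nf
  · ring

theorem euler_mem_tube {x₀ T : ℝ} {n : ℕ} (hy0 : y 0 = x₀)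
    (hy : ∀ i, y (i + 1) = y i + h * f (i * h, y i)) (hh : 0 ≤ h) (hM : 0 ≤ M) (hT : n * h = T)
    (hf : ∀ u ∈ Icc 0 T ×ˢ Icc (x₀ - M * T) (x₀ + M * T), |f u| ≤ M) :
    ∀ k ≤ n, ((k : ℝ) * h, y k) ∈ Icc 0 T ×ˢ Icc (x₀ - M * T) (x₀ + M * T) := by
  intro k
  induction k using Nat.strong_induction_on with
  | _ k ih =>
  intro hk
  have hkT : k * h ≤ T := hT ▸ by gcongr
  have hdist := euler_abs_sub_le hy hh hf (fun i hi => ih i hi (hi.le.trans hk)) k.zero_le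
  rw [hy0, Nat.cast_zero, zero_mul, sub_zero] at hdist
  have := abs_le.1 (hdist.trans (mul_le_mul_of_nonneg_left hkT hM))
  exact ⟨⟨by positivity, hkT⟩, by constructor <;> linarith⟩

end Euler

theorem continuousOn_of_abs_sub_le {U : Set (ℝ × ℝ)} {f : ℝ × ℝ → ℝ} {L : ℝ} (hL : 0 ≤ L)
    (hf : ∀ u ∈ U, ∀ v ∈ U, |f u - f v| ≤ L * (|u.1 - v.1| + |u.2 - v.2|)) :
    ContinuousOn f U := by
  refine (LipschitzOnWith.of_dist_le_mul (K := Real.toNNReal (2 * L))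
    fun u hu v hv => ?_).continuousOn
  rw [Real.coe_toNNReal _ (by positivity), Real.dist_eq, Prod.dist_eq, Real.dist_eq, Real.dist_eq]
  refine (hf u hu v hv).trans ?_
  nlinarith [le_max_left |u.1 - v.1| |u.2 - v.2|, le_max_right |u.1 - v.1| |u.2 - v.2|]

theorem abs_sub_sub_le_of_dyadic_limit {a C : ℝ} {U : Set (ℝ × ℝ)} {f : ℝ × ℝ → ℝ}
    {X : ℕ → ℕ → ℝ} {x : ℝ → ℝ} (hfU : ContinuousOn f U)
    (hx_dyadic : ∀ m k : ℕ, k ≤ 2 ^ m →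
      Tendsto (fun n : ℕ => X (m + n) (2 ^ n * k)) atTop (𝓝 (x (a * k / 2 ^ m))))
    (hXU : ∀ m k : ℕ, k ≤ 2 ^ m → (a * k / 2 ^ m, X m k) ∈ U)
    (hxU : ∀ m k : ℕ, k ≤ 2 ^ m → (a * k / 2 ^ m, x (a * k / 2 ^ m)) ∈ U)
    (hX : ∀ m k j : ℕ, k ≤ j → j ≤ 2 ^ m →
      |X m j - X m k - (a * j / 2 ^ m - a * k / 2 ^ m) * f (a * k / 2 ^ m, X m k)| ≤
        C * (a * j / 2 ^ m - a * k / 2 ^ m) ^ 2)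
    (m k j : ℕ) (hkj : k ≤ j) (hj : j ≤ 2 ^ m) :
    |x (a * j / 2 ^ m) - x (a * k / 2 ^ m)
        - (a * j / 2 ^ m - a * k / 2 ^ m) * f (a * k / 2 ^ m, x (a * k / 2 ^ m))| ≤
      C * (a * j / 2 ^ m - a * k / 2 ^ m) ^ 2 := by
  have hk := hkj.trans hj
  have hle {i : ℕ} (hi : i ≤ 2 ^ m) (n : ℕ) : 2 ^ n * i ≤ 2 ^ (m + n) := by
    rw [pow_add, mul_comm (2 ^ m)]; exact Nat.mul_le_mul_left _ hi
  have hXk := hx_dyadic m k hk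
  have hfk : Tendsto (fun n => f (a * k / 2 ^ m, X (m + n) (2 ^ n * k))) atTop
      (𝓝 (f (a * k / 2 ^ m, x (a * k / 2 ^ m)))) :=
    (hfU _ (hxU m k hk)).tendsto.comp <| tendsto_nhdsWithin_iff.2
      ⟨tendsto_const_nhds.prodMk_nhds hXk, Eventually.of_forall fun n => by
        simpa only [dyadic_refine] using hXU (m + n) _ (hle hk n)⟩
  refine le_of_tendsto (((hx_dyadic m j hj).sub hXk).sub (hfk.const_mul _)).abs
    (Eventually.of_forall fun n => ?_)
  simpa only [dyadic_refine] using hX (m + n) _ _ (Nat.mul_le_mul_left _ hkj) (hle hj n)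

theorem tendsto_dyadic_floor {a u : ℝ} (ha : 0 < a) (hu : u ∈ Icc 0 a) :
    Tendsto (fun m : ℕ => a * ⌊2 ^ m * u / a⌋₊ / 2 ^ m) atTop (𝓝[Icc 0 a] u) := by
  have hfloor (m : ℕ) : u - a / 2 ^ m ≤ a * ⌊2 ^ m * u / a⌋₊ / 2 ^ m ∧
      a * ⌊2 ^ m * u / a⌋₊ / 2 ^ m ≤ u := by
    set q := 2 ^ m * u / a
    have hq : a * q / 2 ^ m = u := by simp only [q]; field_simp
    constructor
    · calc u - a / 2 ^ m = a * (q - 1) / 2 ^ m := by rw [← hq]; ring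
        _ ≤ a * ⌊q⌋₊ / 2 ^ m := by gcongr; linarith [Nat.lt_floor_add_one q]
    · calc a * ⌊q⌋₊ / 2 ^ m ≤ a * q / 2 ^ m := by
            gcongr; exact Nat.floor_le (by have := hu.1; positivity)
        _ = u := hq
  refine tendsto_nhdsWithin_iff.2 ⟨?_, Eventually.of_forall fun m => ⟨by positivity, ?_⟩⟩
  · refine tendsto_of_tendsto_of_tendsto_of_le_of_le ?_ tendsto_const_nhds
      (fun m => (hfloor m).1) (fun m => (hfloor m).2)
    have hpow := tendsto_pow_atTop_nhds_zero_of_lt_one (by norm_num) (by norm_num : (1 / 2 : ℝ) < 1)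
    simpa [div_eq_mul_inv] using tendsto_const_nhds.sub (hpow.const_mul a)
  · exact (hfloor m).2.trans hu.2

theorem floor_two_pow_mul_div_le {a u : ℝ} (ha : 0 < a) (hu : u ≤ a) (m : ℕ) :
    ⌊2 ^ m * u / a⌋₊ ≤ 2 ^ m := by
  apply Nat.floor_le_of_le
  rw [div_le_iff₀ ha]
  push_cast
  gcongr

theorem ContinuousOn.nonpos_of_dyadic_nonpos {a : ℝ} (ha : 0 < a) {F : ℝ × ℝ → ℝ}
    (hF : ContinuousOn F (Icc 0 a ×ˢ Icc 0 a))
    (hdy : ∀ m k j : ℕ, k ≤ j → j ≤ 2 ^ m → F (a * k / 2 ^ m, a * j / 2 ^ m) ≤ 0)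
    {s t : ℝ} (hs : s ∈ Icc 0 a) (ht : t ∈ Icc 0 a) (hst : s ≤ t) : F (s, t) ≤ 0 := by
  have hlim := (hF _ ⟨hs, ht⟩).tendsto.comp <| by
    rw [nhdsWithin_prod_eq]
    exact (tendsto_dyadic_floor ha hs).prodMk (tendsto_dyadic_floor ha ht)
  refine le_of_tendsto hlim (Eventually.of_forall fun m => hdy m _ _ ?_ ?_)
  · gcongr
  · exact floor_two_pow_mul_div_le ha ht.2 m

theorem hasDerivWithinAt_of_forward_sq_bound {I : Set ℝ} {x g : ℝ → ℝ} {C t : ℝ}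
    (hbound : ∀ s ∈ I, ∀ u ∈ I, s ≤ u → |x u - x s - (u - s) * g s| ≤ C * (u - s) ^ 2)
    (hg : ContinuousWithinAt g I t) (ht : t ∈ I) : HasDerivWithinAt x (g t) I t := by
  set φ := fun y => C * |y - t| + |g y - g t|
  have hφ : Tendsto φ (𝓝[I] t) (𝓝 0) := by
    have := (((tendsto_id.sub_const t).abs.const_mul C).mono_left nhdsWithin_le_nhds).add
      (hg.tendsto.sub_const (g t)).abs
    simpa using this
  have hsmall : (fun y => (y - t) * φ y) =o[𝓝[I] t] fun y => y - t := by
    simpa using (Asymptotics.isBigO_refl (fun y => y - t) _).mul_isLittleO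
      ((Asymptotics.isLittleO_one_iff ℝ).2 hφ)
  rw [hasDerivWithinAt_iff_isLittleO]
  refine Asymptotics.IsBigO.trans_isLittleO (Asymptotics.IsBigO.of_bound 1
    (eventually_mem_nhdsWithin.mono fun y hy => ?_)) hsmall
  rw [one_mul, Real.norm_eq_abs, Real.norm_eq_abs, smul_eq_mul, abs_mul]
  refine le_trans ?_ (mul_le_mul_of_nonneg_left (le_abs_self (φ y)) (abs_nonneg _))
  rcases le_total t y with hty | hyt
  · calc |x y - x t - (y - t) * g t| ≤ C * (y - t) ^ 2 := hbound t ht y hy hty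
      _ ≤ |y - t| * φ y := by
        rw [← sq_abs]; nlinarith [abs_nonneg (y - t), abs_nonneg (g y - g t)]
  -- for `y < t`, use the bound based at `y` and pay `|g y - g t|` for moving the base point
  · calc |x y - x t - (y - t) * g t|
          = |-(x t - x y - (t - y) * g y) - (t - y) * (g y - g t)| := by ring_nf
      _ ≤ C * (t - y) ^ 2 + (t - y) * |g y - g t| := by
        refine (abs_sub _ _).trans (add_le_add ?_ ?_)
        · rw [abs_neg]; exact hbound y hy t ht hyt
        · rw [abs_mul, abs_of_nonneg (sub_nonneg.2 hyt)]
      _ = |y - t| * φ y := by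
        simp only [φ, abs_of_nonpos (sub_nonpos.2 hyt)]; ring

theorem forward_sq_bound_of_dyadic {a C : ℝ} {x g : ℝ → ℝ} (ha : 0 < a)
    (hx : ContinuousOn x (Icc 0 a)) (hg : ContinuousOn g (Icc 0 a))
    (hdy : ∀ m k j : ℕ, k ≤ j → j ≤ 2 ^ m →
      |x (a * j / 2 ^ m) - x (a * k / 2 ^ m) - (a * j / 2 ^ m - a * k / 2 ^ m) * g (a * k / 2 ^ m)|
        ≤ C * (a * j / 2 ^ m - a * k / 2 ^ m) ^ 2) :
    ∀ s ∈ Icc 0 a, ∀ u ∈ Icc 0 a, s ≤ u → |x u - x s - (u - s) * g s| ≤ C * (u - s) ^ 2 := by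
  intro s hs u hu hsu
  have hF : ContinuousOn (fun p : ℝ × ℝ => |x p.2 - x p.1 - (p.2 - p.1) * g p.1|
      - C * (p.2 - p.1) ^ 2) (Icc 0 a ×ˢ Icc 0 a) := by
    have hfst : MapsTo Prod.fst (Icc 0 a ×ˢ Icc 0 a) (Icc 0 a) := fun _ hp => hp.1
    have hsnd : MapsTo Prod.snd (Icc 0 a ×ˢ Icc 0 a) (Icc 0 a) := fun _ hp => hp.2
    have hx₁ := hx.comp continuousOn_fst hfst
    have hx₂ := hx.comp continuousOn_snd hsnd
    have hg₁ := hg.comp continuousOn_fst hfst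
    exact ((hx₂.sub hx₁).sub ((continuousOn_snd.sub continuousOn_fst).mul hg₁)).abs.sub
      (continuousOn_const.mul ((continuousOn_snd.sub continuousOn_fst).pow 2))
  exact sub_nonpos.1 <| hF.nonpos_of_dyadic_nonpos ha
    (fun m k j hkj hj => sub_nonpos.2 (hdy m k j hkj hj)) hs hu hsu

/-- The limit function x is differentiable on [0,a] (one-sidedly at the
endpoints) with x'(t) = f(t, x(t)), and x(0) = x₀: it solves the IVP on [0,a]. -/
theorem limit_function_solves_ivp
    (a M L x₀ : ℝ) (ha : 0 < a) (hM : 0 < M) (hL : 0 < L)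
    (U : Set (ℝ × ℝ))
    (hU : U = Set.Icc (0 : ℝ) a ×ˢ Set.Icc (x₀ - M * a) (x₀ + M * a))
    (f : ℝ × ℝ → ℝ)
    (hf_lip : ∀ u ∈ U, ∀ v ∈ U, |f u - f v| ≤ L * (|u.1 - v.1| + |u.2 - v.2|))
    (hf_bdd : ∀ u ∈ U, |f u| ≤ M)
    (X : ℕ → ℕ → ℝ)
    (hX0 : ∀ m, X m 0 = x₀)
    (hXs : ∀ m k, X m (k + 1) = X m k + a / 2 ^ m * f (a * k / 2 ^ m, X m k))
    (x : ℝ → ℝ)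
    (hx_dyadic : ∀ m k : ℕ, k ≤ 2 ^ m →
      Tendsto (fun n : ℕ => X (m + n) (2 ^ n * k)) atTop (𝓝 (x (a * k / 2 ^ m))))
    (hx_lip : ∀ t ∈ Set.Icc (0 : ℝ) a, ∀ s ∈ Set.Icc (0 : ℝ) a, |x t - x s| ≤ M * |t - s|) :
    x 0 = x₀ ∧
    ∀ t ∈ Set.Icc (0 : ℝ) a, HasDerivWithinAt x (f (t, x t)) (Set.Icc (0 : ℝ) a) t := by
  have hgrid (m : ℕ) (i : ℝ) : i * (a / 2 ^ m) = a * i / 2 ^ m := by ring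
  have hstep (m : ℕ) (i : ℕ) : X m (i + 1) = X m i + a / 2 ^ m * f (i * (a / 2 ^ m), X m i) := by
    rw [hgrid]; exact hXs m i
  have hx0 : x 0 = x₀ := by simpa [hX0, eq_comm] using hx_dyadic 0 0 (Nat.zero_le _)
  have hXU (m k : ℕ) (hk : k ≤ 2 ^ m) : (a * k / 2 ^ m, X m k) ∈ U := by
    rw [hU, ← hgrid]
    refine euler_mem_tube (hX0 m) (hstep m) (by positivity) hM.le ?_ (hU ▸ hf_bdd) k hk
    push_cast; field_simp
  have hxU (s : ℝ) (hs : s ∈ Icc 0 a) : (s, x s) ∈ U := by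
    have := hx_lip s hs 0 ⟨le_rfl, ha.le⟩
    rw [hx0, sub_zero, abs_of_nonneg hs.1] at this
    have := abs_le.1 (this.trans (mul_le_mul_of_nonneg_left hs.2 hM.le))
    exact hU ▸ ⟨hs, by constructor <;> linarith⟩
  have hfU := continuousOn_of_abs_sub_le hL.le hf_lip
  have hxc : ContinuousOn x (Icc 0 a) :=
    (LipschitzOnWith.of_dist_le_mul (K := M.toNNReal) fun s hs t ht => by
      simpa [Real.dist_eq, Real.coe_toNNReal _ hM.le] using hx_lip s hs t ht).continuousOn
  have hgc : ContinuousOn (fun s => f (s, x s)) (Icc 0 a) :=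
    hfU.comp (continuousOn_id.prodMk hxc) hxU
  have hXerr (m k j : ℕ) (hkj : k ≤ j) (hj : j ≤ 2 ^ m) := by
    simpa only [hgrid] using euler_abs_sub_sub_le (hstep m) (by positivity) hL.le hf_bdd hf_lip
      (fun i hi => by rw [hgrid]; exact hXU m i (hi.le.trans hj)) hkj
  have hdy := abs_sub_sub_le_of_dyadic_limit hfU hx_dyadic hXU
    (fun m k hk => hxU _ (hU ▸ hXU m k hk).1) hXerr
  exact ⟨hx0, fun t ht => hasDerivWithinAt_of_forward_sq_bound
    (forward_sq_bound_of_dyadic ha hxc hgc hdy) (hgc t ht) ht⟩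
end

section
/- Suppose x : [0,a] → ℝ is differentiable on [0,a] (one-sidedly at the endpoints) with x(0) = x₀ and x'(t) = f(t, x(t)) for all t ∈ [0,a]. Then |x(t) − x₀| ≤ M·a for all t ∈ [0,a]; that is, (t, x(t)) ∈ U for all t ∈ [0,a]. -/
/-!
An a priori bound by a continuity argument. As long as the solution has stayed within distance
`M * a` of `x₀`, its slope is at most `M`, so by the mean value inequality it has moved by at most
`M * t ≤ M * a`. Take the first time `τ < a` at which the distance `M * a` would be reached: on
`[0, τ)` the slope bound holds, so the distance at `τ` is at most `M * τ < M * a`, a contradiction.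
-/

open Set

section APrioriBound

variable {E : Type*} [NormedAddCommGroup E] [NormedSpace ℝ E] {x x' : ℝ → E} {t₀ a M r : ℝ}

theorem norm_sub_le_mul_of_forall_Ico_norm_sub_le {b : ℝ}
    (hx : ∀ t ∈ Icc t₀ a, HasDerivWithinAt x (x' t) (Icc t₀ a) t)
    (hbound : ∀ t ∈ Icc t₀ a, ‖x t - x t₀‖ ≤ r → ‖x' t‖ ≤ M) (hba : b ≤ a)
    (hstay : ∀ t ∈ Ico t₀ b, ‖x t - x t₀‖ ≤ r) :
    ∀ t ∈ Icc t₀ b, ‖x t - x t₀‖ ≤ M * (t - t₀) := by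
  have hsub : Icc t₀ b ⊆ Icc t₀ a := Icc_subset_Icc_right hba
  exact norm_image_sub_le_of_norm_deriv_le_segment' (fun t ht => (hx t (hsub ht)).mono hsub)
    fun t ht => hbound t (hsub (Ico_subset_Icc_self ht)) (hstay t ht)

theorem norm_sub_lt_of_forall_norm_deriv_le (hM : 0 ≤ M) (hr : 0 < r) (hMr : M * (a - t₀) ≤ r)
    (hx : ∀ t ∈ Icc t₀ a, HasDerivWithinAt x (x' t) (Icc t₀ a) t)
    (hbound : ∀ t ∈ Icc t₀ a, ‖x t - x t₀‖ ≤ r → ‖x' t‖ ≤ M) :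
    ∀ t ∈ Ico t₀ a, ‖x t - x t₀‖ < r := by
  by_contra! ⟨t₁, ht₁, hrt₁⟩
  have hsub : Icc t₀ t₁ ⊆ Icc t₀ a := Icc_subset_Icc_right ht₁.2.le
  have hcont : ContinuousOn (fun t => ‖x t - x t₀‖) (Icc t₀ t₁) := fun t ht =>
    (((hx t (hsub ht)).continuousWithinAt.mono hsub).sub_const _).norm
  have hexit : IsCompact (Icc t₀ t₁ ∩ (fun t => ‖x t - x t₀‖) ⁻¹' Ici r) :=
    isCompact_Icc.of_isClosed_subset
      (hcont.preimage_isClosed_of_isClosed isClosed_Icc isClosed_Ici) inter_subset_left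
  obtain ⟨τ, ⟨hτ, hrτ⟩, hτ_least⟩ := hexit.exists_isLeast ⟨t₁, ⟨ht₁.1, le_rfl⟩, hrt₁⟩
  have hstay : ∀ t ∈ Ico t₀ τ, ‖x t - x t₀‖ ≤ r := fun t ht => by
    by_contra! hrt
    exact (hτ_least ⟨⟨ht.1, ht.2.le.trans hτ.2⟩, hrt.le⟩).not_gt ht.2
  have hτa : τ < a := hτ.2.trans_lt ht₁.2
  have hMτ : M * (τ - t₀) < r := by
    rcases hM.eq_or_lt with rfl | hM
    · simpa using hr
    · exact (mul_lt_mul_of_pos_left (by linarith) hM).trans_le hMr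
  have hτ_dist := norm_sub_le_mul_of_forall_Ico_norm_sub_le hx hbound hτa.le hstay τ ⟨hτ.1, le_rfl⟩
  exact (hrτ.trans hτ_dist).not_gt hMτ

theorem norm_sub_le_mul_of_forall_norm_deriv_le (hM : 0 ≤ M) (hr : 0 < r)
    (hMr : M * (a - t₀) ≤ r) (hx : ∀ t ∈ Icc t₀ a, HasDerivWithinAt x (x' t) (Icc t₀ a) t)
    (hbound : ∀ t ∈ Icc t₀ a, ‖x t - x t₀‖ ≤ r → ‖x' t‖ ≤ M) :
    ∀ t ∈ Icc t₀ a, ‖x t - x t₀‖ ≤ M * (t - t₀) :=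
  norm_sub_le_mul_of_forall_Ico_norm_sub_le hx hbound le_rfl fun t ht =>
    (norm_sub_lt_of_forall_norm_deriv_le hM hr hMr hx hbound t ht).le

end APrioriBound

theorem solution_stays_in_U_general
    (a M x₀ : ℝ) (ha : 0 < a) (hM : 0 < M)
    (U : Set (ℝ × ℝ))
    (hU : U = Set.Icc (0 : ℝ) a ×ˢ Set.Icc (x₀ - M * a) (x₀ + M * a))
    (f : ℝ × ℝ → ℝ)
    (hf_bdd : ∀ u ∈ U, |f u| ≤ M)
    (x : ℝ → ℝ)
    (hx0 : x 0 = x₀)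
    (hderiv : ∀ t ∈ Set.Icc (0 : ℝ) a,
      HasDerivWithinAt x (f (t, x t)) (Set.Icc (0 : ℝ) a) t) :
    ∀ t ∈ Set.Icc (0 : ℝ) a, |x t - x₀| ≤ M * a ∧ (t, x t) ∈ U := by
  have mem_U : ∀ t ∈ Icc 0 a, |x t - x₀| ≤ M * a → (t, x t) ∈ U := fun t ht h => by
    rw [hU]
    exact ⟨ht, by linarith [abs_le.mp h], by linarith [abs_le.mp h]⟩
  subst hx0
  have hdist := norm_sub_le_mul_of_forall_norm_deriv_le hM.le (mul_pos hM ha) (by rw [sub_zero])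
    hderiv fun t ht h => hf_bdd _ (mem_U t ht h)
  intro t ht
  have hle : |x t - x 0| ≤ M * a := by
    simpa using (hdist t ht).trans (mul_le_mul_of_nonneg_left (by linarith [ht.2]) hM.le)
  exact ⟨hle, mem_U t ht hle⟩

/-- Any solution of the IVP on [0,a] satisfies |x(t) − x₀| ≤ M·a,
i.e. (t, x(t)) ∈ U for all t ∈ [0,a]. -/
theorem solution_stays_in_U
    (a M L x₀ : ℝ) (ha : 0 < a) (hM : 0 < M) (hL : 0 < L)
    (U : Set (ℝ × ℝ))
    (hU : U = Set.Icc (0 : ℝ) a ×ˢ Set.Icc (x₀ - M * a) (x₀ + M * a))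
    (f : ℝ × ℝ → ℝ)
    (hf_lip : ∀ u ∈ U, ∀ v ∈ U, |f u - f v| ≤ L * (|u.1 - v.1| + |u.2 - v.2|))
    (hf_bdd : ∀ u ∈ U, |f u| ≤ M)
    (x : ℝ → ℝ)
    (hx0 : x 0 = x₀)
    (hderiv : ∀ t ∈ Set.Icc (0 : ℝ) a,
      HasDerivWithinAt x (f (t, x t)) (Set.Icc (0 : ℝ) a) t) :
    ∀ t ∈ Set.Icc (0 : ℝ) a, |x t - x₀| ≤ M * a ∧ (t, x t) ∈ U :=
  solution_stays_in_U_general a M x₀ ha hM U hU f hf_bdd x hx0 hderiv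
end

section
/- There exists a function x : [0,a] → ℝ, differentiable on [0,a] (one-sidedly at the endpoints), such that x(0) = x₀, (t, x(t)) ∈ U for all t ∈ [0,a], and x'(t) = f(t, x(t)) for all t ∈ [0,a]. That is, the initial value problem x' = f(t,x), x(0) = x₀ admits a solution defined on all of [0,a]. -/
open Set

/-!
Clamp both variables of `f` into the box, so that the resulting field is bounded by `M` and
Lipschitz on the whole plane and agrees with `f` on the box. Picard–Lindelöf gives a solution of
the clamped problem on `[t₀, t₁]`; since its speed is at most `M`, it never leaves the strip of
half-width `M (t₁ - t₀)` around `x₀`, where the clamped field is `f` itself.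
-/

section BoxExtend

variable {t₀ t₁ c d : ℝ} (ht : t₀ ≤ t₁) (hcd : c ≤ d)

noncomputable def boxExtend (f : ℝ × ℝ → ℝ) (t y : ℝ) : ℝ :=
  f (projIcc t₀ t₁ ht t, projIcc c d hcd y)

variable {ht hcd} {f : ℝ × ℝ → ℝ}

lemma boxExtend_of_mem {t y : ℝ} (hty : (t, y) ∈ Icc t₀ t₁ ×ˢ Icc c d) :
    boxExtend ht hcd f t y = f (t, y) := by
  rw [boxExtend, projIcc_of_mem _ hty.1, projIcc_of_mem _ hty.2]

lemma projIcc_mem_box (t y : ℝ) :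
    ((projIcc t₀ t₁ ht t : ℝ), (projIcc c d hcd y : ℝ)) ∈ Icc t₀ t₁ ×ˢ Icc c d :=
  ⟨Subtype.prop _, Subtype.prop _⟩

lemma abs_boxExtend_le {M : ℝ} (hf : ∀ u ∈ Icc t₀ t₁ ×ˢ Icc c d, |f u| ≤ M) (t y : ℝ) :
    |boxExtend ht hcd f t y| ≤ M :=
  hf _ (projIcc_mem_box t y)

lemma abs_boxExtend_sub_le {L : ℝ}
    (hf : ∀ u ∈ Icc t₀ t₁ ×ˢ Icc c d, ∀ v ∈ Icc t₀ t₁ ×ˢ Icc c d,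
      |f u - f v| ≤ L * (|u.1 - v.1| + |u.2 - v.2|))
    (t s y z : ℝ) :
    |boxExtend ht hcd f t y - boxExtend ht hcd f s z| ≤ L.toNNReal * (|t - s| + |y - z|) :=
  calc |boxExtend ht hcd f t y - boxExtend ht hcd f s z|
      ≤ L * (|(projIcc t₀ t₁ ht t : ℝ) - projIcc t₀ t₁ ht s| +
          |(projIcc c d hcd y : ℝ) - projIcc c d hcd z|) :=
        hf _ (projIcc_mem_box t y) _ (projIcc_mem_box s z)
    _ ≤ L.toNNReal * (|(projIcc t₀ t₁ ht t : ℝ) - projIcc t₀ t₁ ht s| +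
          |(projIcc c d hcd y : ℝ) - projIcc c d hcd z|) := by
        gcongr
        exact Real.le_coe_toNNReal L
    _ ≤ L.toNNReal * (|t - s| + |y - z|) := by
        gcongr ?_ * (?_ + ?_) <;> exact abs_projIcc_sub_projIcc _

end BoxExtend

section GlobalField

variable {g : ℝ → ℝ → ℝ} {L M : ℝ}

lemma isPicardLindelof_of_abs_sub_le {tmin tmax : ℝ} (t₀ : Icc tmin tmax) (x₀ : ℝ) (hM : 0 ≤ M)
    (hlip : ∀ t s y z, |g t y - g s z| ≤ L.toNNReal * (|t - s| + |y - z|))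
    (hbdd : ∀ t y, |g t y| ≤ M) :
    IsPicardLindelof g t₀ x₀ (M * max (tmax - t₀) (t₀ - tmin)).toNNReal 0
      M.toNNReal L.toNNReal where
  lipschitzOnWith t _ := LipschitzWith.lipschitzOnWith <| .of_dist_le_mul fun y z => by
    simpa [Real.dist_eq] using hlip t t y z
  continuousOn y _ := LipschitzWith.continuous (K := L.toNNReal)
    (.of_dist_le_mul fun t s => by simpa [Real.dist_eq] using hlip t s y y) |>.continuousOn
  norm_le t _ y _ := by simpa [Real.coe_toNNReal _ hM] using hbdd t y
  mul_max_le := by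
    rw [Real.coe_toNNReal _ hM, NNReal.coe_zero, sub_zero,
      Real.coe_toNNReal _ (mul_nonneg hM (le_max_of_le_left (sub_nonneg.2 t₀.2.2)))]

lemma exists_forall_mem_Icc_abs_sub_le_hasDerivWithinAt {t₀ t₁ : ℝ} (ht : t₀ ≤ t₁) (x₀ : ℝ)
    (hM : 0 ≤ M) (hlip : ∀ t s y z, |g t y - g s z| ≤ L.toNNReal * (|t - s| + |y - z|))
    (hbdd : ∀ t y, |g t y| ≤ M) :
    ∃ x : ℝ → ℝ, x t₀ = x₀ ∧ ∀ t ∈ Icc t₀ t₁,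
      |x t - x₀| ≤ M * (t - t₀) ∧ HasDerivWithinAt x (g t (x t)) (Icc t₀ t₁) t := by
  obtain ⟨x, hx₀, hx⟩ := (isPicardLindelof_of_abs_sub_le ⟨t₀, left_mem_Icc.2 ht⟩ x₀ hM hlip
    hbdd).exists_eq_forall_mem_Icc_hasDerivWithinAt₀
  refine ⟨x, hx₀, fun t ht' => ⟨?_, hx t ht'⟩⟩
  have := (convex_Icc t₀ t₁).norm_image_sub_le_of_norm_hasDerivWithin_le hx
    (fun s _ => hbdd s (x s)) (left_mem_Icc.2 ht) ht'
  simpa [hx₀, abs_of_nonneg (sub_nonneg.2 ht'.1)] using this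

end GlobalField

theorem exists_forall_mem_Icc_hasDerivWithinAt_of_lipschitzOn_box {t₀ t₁ x₀ r L M : ℝ}
    (ht : t₀ ≤ t₁) (hM : 0 ≤ M) (hr : M * (t₁ - t₀) ≤ r) {f : ℝ × ℝ → ℝ}
    (hf_lip : ∀ u ∈ Icc t₀ t₁ ×ˢ Icc (x₀ - r) (x₀ + r), ∀ v ∈ Icc t₀ t₁ ×ˢ Icc (x₀ - r) (x₀ + r),
      |f u - f v| ≤ L * (|u.1 - v.1| + |u.2 - v.2|))
    (hf_bdd : ∀ u ∈ Icc t₀ t₁ ×ˢ Icc (x₀ - r) (x₀ + r), |f u| ≤ M) :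
    ∃ x : ℝ → ℝ, x t₀ = x₀ ∧ ∀ t ∈ Icc t₀ t₁,
      (t, x t) ∈ Icc t₀ t₁ ×ˢ Icc (x₀ - r) (x₀ + r) ∧
        HasDerivWithinAt x (f (t, x t)) (Icc t₀ t₁) t := by
  have hr₀ : 0 ≤ r := (mul_nonneg hM (sub_nonneg.2 ht)).trans hr
  have hx₀r : x₀ - r ≤ x₀ + r := by linarith
  obtain ⟨x, hx₀, hx⟩ := exists_forall_mem_Icc_abs_sub_le_hasDerivWithinAt ht x₀ hM
    (abs_boxExtend_sub_le (ht := ht) (hcd := hx₀r) hf_lip) (abs_boxExtend_le hf_bdd)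
  refine ⟨x, hx₀, fun t htI => ?_⟩
  obtain ⟨hxt, hderiv⟩ := hx t htI
  have hmem : (t, x t) ∈ Icc t₀ t₁ ×ˢ Icc (x₀ - r) (x₀ + r) := by
    refine ⟨htI, ?_⟩
    have : M * (t - t₀) ≤ r := le_trans (by gcongr; exact htI.2) hr
    constructor <;> linarith [abs_le.1 (hxt.trans this)]
  exact ⟨hmem, boxExtend_of_mem (f := f) hmem ▸ hderiv⟩

theorem ivp_existence_general
    (a M L x₀ : ℝ) (ha : 0 < a) (hM : 0 < M)
    (U : Set (ℝ × ℝ))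
    (hU : U = Set.Icc (0 : ℝ) a ×ˢ Set.Icc (x₀ - M * a) (x₀ + M * a))
    (f : ℝ × ℝ → ℝ)
    (hf_lip : ∀ u ∈ U, ∀ v ∈ U, |f u - f v| ≤ L * (|u.1 - v.1| + |u.2 - v.2|))
    (hf_bdd : ∀ u ∈ U, |f u| ≤ M) :
    ∃ x : ℝ → ℝ, x 0 = x₀ ∧
      ∀ t ∈ Set.Icc (0 : ℝ) a,
        (t, x t) ∈ U ∧ HasDerivWithinAt x (f (t, x t)) (Set.Icc (0 : ℝ) a) t := by
  subst hU
  exact exists_forall_mem_Icc_hasDerivWithinAt_of_lipschitzOn_box ha.le hM.le (by rw [sub_zero])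
    hf_lip hf_bdd

/-- Existence: the IVP x' = f(t,x), x(0) = x₀ admits a solution on [0,a],
taking values with (t, x(t)) ∈ U. -/
theorem ivp_existence
    (a M L x₀ : ℝ) (ha : 0 < a) (hM : 0 < M) (hL : 0 < L)
    (U : Set (ℝ × ℝ))
    (hU : U = Set.Icc (0 : ℝ) a ×ˢ Set.Icc (x₀ - M * a) (x₀ + M * a))
    (f : ℝ × ℝ → ℝ)
    (hf_lip : ∀ u ∈ U, ∀ v ∈ U, |f u - f v| ≤ L * (|u.1 - v.1| + |u.2 - v.2|))
    (hf_bdd : ∀ u ∈ U, |f u| ≤ M) :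
    ∃ x : ℝ → ℝ, x 0 = x₀ ∧
      ∀ t ∈ Set.Icc (0 : ℝ) a,
        (t, x t) ∈ U ∧ HasDerivWithinAt x (f (t, x t)) (Set.Icc (0 : ℝ) a) t :=
  ivp_existence_general a M L x₀ ha hM U hU f hf_lip hf_bdd
end

section
/- Suppose x₁, x₂ : [0,a] → ℝ are both differentiable on [0,a] (one-sidedly at the endpoints) with x₁(0) = x₂(0) = x₀, x₁'(t) = f(t, x₁(t)) and x₂'(t) = f(t, x₂(t)) for all t ∈ [0,a]. Then x₁(t) = x₂(t) for all t ∈ [0,a]. In other words, the initial value problem x' = f(t,x), x(0) = x₀ has at most one solution with domain [0,a]. -/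
open Filter Topology Set

/-!
While a solution stays in `U` its slope is at most `M`, so it stays in the cone
`|x t - x₀| ≤ M t`; before time `a` this cone lies strictly inside `U`, so by continuous induction
the solution never leaves `U`. On `U` the field is Lipschitz in `x`, and Grönwall's inequality
gives uniqueness.
-/

theorem abs_sub_le_mul_of_abs_deriv_le_in_band {x x' : ℝ → ℝ} {t₀ T x₀ M : ℝ} (hM : 0 < M)
    (hx : ∀ t ∈ Icc t₀ T, HasDerivWithinAt x (x' t) (Icc t₀ T) t) (hx₀ : x t₀ = x₀)
    (hx' : ∀ t ∈ Icc t₀ T, |x t - x₀| ≤ M * (T - t₀) → |x' t| ≤ M) :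
    ∀ t ∈ Icc t₀ T, |x t - x₀| ≤ M * (t - t₀) := by
  have hcont : ContinuousOn x (Icc t₀ T) := fun t ht => (hx t ht).continuousWithinAt
  intro t ht
  refine IsClosed.Icc_subset_of_forall_mem_nhdsWithin (s := {t | |x t - x₀| ≤ M * (t - t₀)})
    ?_ (by simp [hx₀]) ?_ ht
  · rw [inter_comm]
    exact isClosed_Icc.isClosed_le ((hcont.sub continuousOn_const).abs)
      (continuousOn_const.mul (continuousOn_id.sub continuousOn_const))
  rintro τ ⟨hτx, hτ⟩
  have hIcc : Icc t₀ T ∈ 𝓝[≥] τ := Icc_mem_nhdsGE_of_mem hτ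
  -- the cone lies strictly inside the band before time `T`
  have hband : ∀ᶠ t in 𝓝[≥] τ, |x t - x₀| < M * (T - t₀) :=
    (((hcont τ (Ico_subset_Icc_self hτ)).mono_of_mem_nhdsWithin hIcc).sub_const x₀).abs
      |>.eventually_lt_const (hτx.trans_lt (by nlinarith [hτ.2]))
  obtain ⟨b, hτb, hb⟩ := mem_nhdsGE_iff_exists_Icc_subset.1 (inter_mem hIcc hband)
  refine mem_of_superset (Icc_mem_nhdsGT hτb) fun t ht => ?_
  have hmvt : |x t - x τ| ≤ M * |t - τ| :=
    (convex_Icc τ b).norm_image_sub_le_of_norm_hasDerivWithin_le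
      (fun u hu => (hx u (hb hu).1).mono fun v hv => (hb hv).1)
      (fun u hu => hx' u (hb hu).1 (hb hu).2.le) (left_mem_Icc.2 hτb.le) ht
  calc |x t - x₀| ≤ |x t - x τ| + |x τ - x₀| := abs_sub_le _ _ _
    _ ≤ M * (t - τ) + M * (τ - t₀) := by
      rw [abs_of_nonneg (sub_nonneg.2 ht.1)] at hmvt
      exact add_le_add hmvt hτx
    _ = M * (t - t₀) := by ring

theorem mapsTo_Icc_of_hasDerivWithinAt_of_abs_le {f : ℝ × ℝ → ℝ} {x : ℝ → ℝ} {a M x₀ : ℝ}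
    (hM : 0 < M) (hf : ∀ u ∈ Icc 0 a ×ˢ Icc (x₀ - M * a) (x₀ + M * a), |f u| ≤ M)
    (hx0 : x 0 = x₀) (hx : ∀ t ∈ Icc 0 a, HasDerivWithinAt x (f (t, x t)) (Icc 0 a) t) :
    MapsTo x (Icc 0 a) (Icc (x₀ - M * a) (x₀ + M * a)) := by
  have hband : ∀ t ∈ Icc 0 a, |x t - x₀| ≤ M * a → x t ∈ Icc (x₀ - M * a) (x₀ + M * a) :=
    fun t _ h => by rw [← Real.closedBall_eq_Icc, Metric.mem_closedBall, Real.dist_eq]; exact h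
  intro t ht
  apply hband t ht
  calc |x t - x₀| ≤ M * (t - 0) :=
        abs_sub_le_mul_of_abs_deriv_le_in_band hM hx hx0
          (fun s hs hs' => hf _ (mk_mem_prod hs (hband s hs (by simpa using hs')))) t ht
    _ ≤ M * a := by nlinarith [ht.2]

theorem ivp_uniqueness_general
    (a M L x₀ : ℝ) (hM : 0 < M)
    (U : Set (ℝ × ℝ))
    (hU : U = Set.Icc (0 : ℝ) a ×ˢ Set.Icc (x₀ - M * a) (x₀ + M * a))
    (f : ℝ × ℝ → ℝ)
    (hf_lip : ∀ u ∈ U, ∀ v ∈ U, |f u - f v| ≤ L * (|u.1 - v.1| + |u.2 - v.2|))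
    (hf_bdd : ∀ u ∈ U, |f u| ≤ M)
    (x₁ x₂ : ℝ → ℝ)
    (hx₁0 : x₁ 0 = x₀) (hx₂0 : x₂ 0 = x₀)
    (hderiv₁ : ∀ t ∈ Set.Icc (0 : ℝ) a,
      HasDerivWithinAt x₁ (f (t, x₁ t)) (Set.Icc (0 : ℝ) a) t)
    (hderiv₂ : ∀ t ∈ Set.Icc (0 : ℝ) a,
      HasDerivWithinAt x₂ (f (t, x₂ t)) (Set.Icc (0 : ℝ) a) t) :
    ∀ t ∈ Set.Icc (0 : ℝ) a, x₁ t = x₂ t := by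
  subst hU
  have hlip : ∀ t ∈ Ico 0 a,
      LipschitzOnWith L.toNNReal (fun y => f (t, y)) (Icc (x₀ - M * a) (x₀ + M * a)) :=
    fun t ht => LipschitzOnWith.of_dist_le' fun y hy z hz => by
      have ht' := Ico_subset_Icc_self ht
      simpa [Real.dist_eq] using hf_lip _ (mk_mem_prod ht' hy) _ (mk_mem_prod ht' hz)
  have hderiv_right : ∀ x : ℝ → ℝ, (∀ t ∈ Icc 0 a, HasDerivWithinAt x (f (t, x t)) (Icc 0 a) t) →
      ∀ t ∈ Ico 0 a, HasDerivWithinAt x (f (t, x t)) (Ici t) t :=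
    fun x hx t ht => (hx t (Ico_subset_Icc_self ht)).mono_of_mem_nhdsWithin
      (Icc_mem_nhdsGE_of_mem ht)
  have hsol₁ := mapsTo_Icc_of_hasDerivWithinAt_of_abs_le hM hf_bdd hx₁0 hderiv₁
  have hsol₂ := mapsTo_Icc_of_hasDerivWithinAt_of_abs_le hM hf_bdd hx₂0 hderiv₂
  exact fun t ht => ODE_solution_unique_of_mem_Icc_right hlip
    (fun s hs => (hderiv₁ s hs).continuousWithinAt) (hderiv_right x₁ hderiv₁)
    (fun s hs => hsol₁ (Ico_subset_Icc_self hs))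
    (fun s hs => (hderiv₂ s hs).continuousWithinAt) (hderiv_right x₂ hderiv₂)
    (fun s hs => hsol₂ (Ico_subset_Icc_self hs))
    (hx₁0.trans hx₂0.symm) ht

/-- Uniqueness: two solutions of the IVP x' = f(t,x), x(0) = x₀ on [0,a]
coincide on [0,a]. -/
theorem ivp_uniqueness
    (a M L x₀ : ℝ) (ha : 0 < a) (hM : 0 < M) (hL : 0 < L)
    (U : Set (ℝ × ℝ))
    (hU : U = Set.Icc (0 : ℝ) a ×ˢ Set.Icc (x₀ - M * a) (x₀ + M * a))
    (f : ℝ × ℝ → ℝ)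
    (hf_lip : ∀ u ∈ U, ∀ v ∈ U, |f u - f v| ≤ L * (|u.1 - v.1| + |u.2 - v.2|))
    (hf_bdd : ∀ u ∈ U, |f u| ≤ M)
    (x₁ x₂ : ℝ → ℝ)
    (hx₁0 : x₁ 0 = x₀) (hx₂0 : x₂ 0 = x₀)
    (hderiv₁ : ∀ t ∈ Set.Icc (0 : ℝ) a,
      HasDerivWithinAt x₁ (f (t, x₁ t)) (Set.Icc (0 : ℝ) a) t)
    (hderiv₂ : ∀ t ∈ Set.Icc (0 : ℝ) a,
      HasDerivWithinAt x₂ (f (t, x₂ t)) (Set.Icc (0 : ℝ) a) t) :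
    ∀ t ∈ Set.Icc (0 : ℝ) a, x₁ t = x₂ t :=
  ivp_uniqueness_general a M L x₀ hM U hU f hf_lip hf_bdd x₁ x₂ hx₁0 hx₂0 hderiv₁ hderiv₂
end
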